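/- Let B and C be the central binomial and Catalan generating functions over ℚ and let T_M = B·(C ∘ (zC²)), where ∘ denotes composition of formal power series (well-defined since zC² has zero constant term). For every n ≥ 0, the coefficient of z^n in T_M equals ∑_{k=0}^n (1/(k+1))·binom(2n, n−k)·binom(2k, k); that is, the number of embedded new type trees with n edges is ∑_{k=0}^n (1/(k+1))·binom(2n,n−k)·binom(2k,k). -/

import Mathlib

open PowerSeries Finset

/-- The central binomial generating function `B = ∑ binom(2n,n) zⁿ` over `ℚ`. -/
noncomputable def Bgf : PowerSeries ℚ := PowerSeries.mk fun n => ((2 * n).choose n : ℚ)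

/-- The Catalan generating function `C = ∑ Cₙ zⁿ` over `ℚ`. -/
noncomputable def Cgf : PowerSeries ℚ := PowerSeries.mk fun n => (catalan n : ℚ)

/-- Composition `F ∘ a` of formal power series (intended for `a` with zero constant
term, in which case only the terms with `k ≤ n` contribute to the coefficient of `zⁿ`
in `∑ₖ ([zᵏ]F)·aᵏ`, so the finite sum below is the full composition). -/
noncomputable def PScomp (F a : PowerSeries ℚ) : PowerSeries ℚ :=
  PowerSeries.mk fun n => ∑ k ∈ Finset.range (n + 1),
    PowerSeries.coeff (R := ℚ) k F * PowerSeries.coeff (R := ℚ) n (a ^ k)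

/-- `T_M = B·(C ∘ (zC²))`, the generating function for embedded new type trees. -/
noncomputable def TM : PowerSeries ℚ := Bgf * PScomp Cgf (PowerSeries.X * Cgf ^ 2)

/-! Only the terms `k ≤ n` of `C ∘ (zC²)` reach `zⁿ`, and `(zC²)ᵏ = zᵏ C²ᵏ`, so
`[zⁿ] T_M = ∑ₖ Cₖ · [zⁿ⁻ᵏ] B·C²ᵏ`. From `C = 1 + zC²` we get `B·Cᵐ⁺¹ = B·Cᵐ + z·B·Cᵐ⁺²`,
which is Pascal's rule for `[zⁿ] B·Cᵐ = binom(2n+m, n)`; at `m = 2k` this is `binom(2n, n-k)`. -/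

lemma coeff_X_mul_pow (b : ℚ⟦X⟧) (n k : ℕ) :
    coeff n ((X * b) ^ k) = if k ≤ n then coeff (n - k) (b ^ k) else 0 := by
  rw [mul_pow, coeff_X_pow_mul']

lemma coeff_PScomp_X_mul_of_le (F b : ℚ⟦X⟧) {j N : ℕ} (h : j ≤ N) :
    coeff j (PScomp F (X * b)) = ∑ k ∈ range (N + 1), coeff k F * coeff j ((X * b) ^ k) := by
  rw [PScomp, coeff_mk]
  refine sum_subset (range_subset_range.2 (by omega)) fun k _ hk => ?_
  rw [mem_range, not_lt] at hk
  rw [coeff_X_mul_pow, if_neg (by omega), mul_zero]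

lemma coeff_mul_PScomp_X_mul (G F b : ℚ⟦X⟧) (n : ℕ) :
    coeff n (G * PScomp F (X * b)) =
      ∑ k ∈ range (n + 1), coeff k F * coeff (n - k) (G * b ^ k) := by
  have hexpand : coeff n (G * PScomp F (X * b)) =
      ∑ k ∈ range (n + 1), coeff k F * coeff n (G * (X * b) ^ k) := by
    rw [coeff_mul]
    calc ∑ p ∈ antidiagonal n, coeff p.1 G * coeff p.2 (PScomp F (X * b))
        = ∑ p ∈ antidiagonal n, ∑ k ∈ range (n + 1),
            coeff k F * (coeff p.1 G * coeff p.2 ((X * b) ^ k)) := by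
          refine sum_congr rfl fun p hp => ?_
          rw [coeff_PScomp_X_mul_of_le F b (HasAntidiagonal.antidiagonal.snd_le hp), mul_sum]
          exact sum_congr rfl fun k _ => by ring
      _ = ∑ k ∈ range (n + 1), coeff k F * coeff n (G * (X * b) ^ k) := by
          rw [sum_comm]
          simp only [← mul_sum, coeff_mul]
  rw [hexpand]
  refine sum_congr rfl fun k hk => ?_
  have hkn : k ≤ n := Nat.lt_succ_iff.1 (mem_range.1 hk)
  rw [mul_pow, mul_left_comm, coeff_X_pow_mul', if_pos hkn]

lemma Cgf_eq_map_catalanSeries : Cgf = map (Nat.castRingHom ℚ) catalanSeries := by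
  ext n
  simp [Cgf]

lemma Cgf_eq_one_add_X_mul_sq : Cgf = 1 + X * Cgf ^ 2 := by
  have h := congrArg (map (Nat.castRingHom ℚ)) catalanSeries_sq_mul_X_add_one
  rw [map_add, map_mul, map_pow, map_X, map_one, ← Cgf_eq_map_catalanSeries] at h
  linear_combination -h

lemma coeff_Bgf_mul_Cgf_pow (n m : ℕ) :
    coeff n (Bgf * Cgf ^ m) = ((2 * n + m).choose n : ℚ) := by
  induction n generalizing m with
  | zero =>
    simp [coeff_zero_eq_constantCoeff, Bgf, Cgf]
  | succ n ih =>
    induction m with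
    | zero => simp [Bgf]
    | succ m ihm =>
      have hpascal : Bgf * Cgf ^ (m + 1) = Bgf * Cgf ^ m + X * (Bgf * Cgf ^ (m + 2)) := by
        linear_combination (Bgf * Cgf ^ m) * Cgf_eq_one_add_X_mul_sq
      rw [hpascal, map_add, coeff_succ_X_mul, ihm, ih (m + 2),
        show 2 * (n + 1) + (m + 1) = (2 * (n + 1) + m) + 1 by ring,
        show 2 * n + (m + 2) = 2 * (n + 1) + m by ring, Nat.choose_succ_succ']
      push_cast
      ring

lemma cast_catalan_eq_one_div_mul_choose (k : ℕ) :
    (catalan k : ℚ) = 1 / (k + 1 : ℚ) * ((2 * k).choose k : ℚ) := by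
  have h : ((k + 1 : ℕ) * catalan k : ℚ) = ((2 * k).choose k : ℚ) := by
    exact_mod_cast (succ_mul_catalan_eq_centralBinom k).trans (Nat.centralBinom_eq_two_mul_choose k)
  push_cast at h
  rw [← h]
  field_simp

/-- `[zⁿ] T_M = ∑ₖ (1/(k+1))·binom(2n, n−k)·binom(2k, k)`. -/
theorem stmt8 (n : ℕ) :
    PowerSeries.coeff (R := ℚ) n TM =
      ∑ k ∈ Finset.range (n + 1),
        (1 / (k + 1 : ℚ)) * ((2 * n).choose (n - k) : ℚ) * ((2 * k).choose k : ℚ) := by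
  rw [TM, coeff_mul_PScomp_X_mul]
  refine sum_congr rfl fun k hk => ?_
  have hkn : k ≤ n := Nat.lt_succ_iff.1 (mem_range.1 hk)
  rw [← pow_mul, coeff_Bgf_mul_Cgf_pow, show 2 * (n - k) + 2 * k = 2 * n by omega,
    Cgf, coeff_mk, cast_catalan_eq_one_div_mul_choose]
  ring
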